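/- arXiv:2605.07774 — 6 statements merged into one kernel-verified Lean document; each statement's English description precedes it below -/
import Mathlib

section
/- Let G be a finite simple graph, let C be a finite set of vertices of G, and let K be a clique of maximum size contained in C (i.e., a maximum clique of the induced subgraph G[C]). Then |K| ≤ |C| − 2 if and only if the induced subgraph G[C] contains a 2-anti-matching or a 3-independent set. -/
/-- Let `G` be a finite simple graph, `C` a finite set of vertices, and `K` a
clique of maximum size contained in `C` (a maximum clique of the induced subgraph `G[C]`).
Then `|K| ≤ |C| − 2` if and only if `G[C]` contains a 2-anti-matching (two non-edges with four
pairwise distinct endpoints in `C`) or a 3-independent set (three pairwise distinct,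
pairwise non-adjacent vertices of `C`). -/
theorem solitary_iff_antimatching_or_indep
    {V : Type*} [Fintype V] [DecidableEq V] (G : SimpleGraph V)
    (C K : Finset V) (hKC : K ⊆ C) (hK : G.IsClique (K : Set V))
    (hmax : ∀ K' : Finset V, K' ⊆ C → G.IsClique (K' : Set V) → K'.card ≤ K.card) :
    K.card + 2 ≤ C.card ↔
      ((∃ a b c d : V, a ∈ C ∧ b ∈ C ∧ c ∈ C ∧ d ∈ C ∧
          a ≠ b ∧ c ≠ d ∧ a ≠ c ∧ a ≠ d ∧ b ≠ c ∧ b ≠ d ∧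
          ¬ G.Adj a b ∧ ¬ G.Adj c d) ∨
       (∃ x y z : V, x ∈ C ∧ y ∈ C ∧ z ∈ C ∧ x ≠ y ∧ x ≠ z ∧ y ≠ z ∧
          ¬ G.Adj x y ∧ ¬ G.Adj x z ∧ ¬ G.Adj y z)) := by
  have two_out : ∀ w1 w2 : V, w1 ∈ C → w2 ∈ C → w1 ∉ K → w2 ∉ K → w1 ≠ w2 →
      K.card + 2 ≤ C.card := by
    intro w1 w2 h1C h2C h1K h2K hne
    have hsub : insert w1 (insert w2 K) ⊆ C :=
      Finset.insert_subset h1C (Finset.insert_subset h2C hKC)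
    have hle := Finset.card_le_card hsub
    rw [Finset.card_insert_of_notMem (by simp [hne, h1K]),
        Finset.card_insert_of_notMem h2K] at hle
    omega
  constructor
  · intro h
    have hcard : 2 ≤ (C \ K).card := by
      have := Finset.card_sdiff_of_subset hKC
      omega
    obtain ⟨u, hu, v, hv, huv⟩ := Finset.one_lt_card.mp (by omega : 1 < (C \ K).card)
    obtain ⟨huC, huK⟩ := Finset.mem_sdiff.mp hu
    obtain ⟨hvC, hvK⟩ := Finset.mem_sdiff.mp hv
    have key : ∀ w ∈ C, w ∉ K → ∃ k ∈ K, ¬ G.Adj w k := by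
      intro w hwC hwK
      by_contra hcon
      push_neg at hcon
      have hclique : G.IsClique ((insert w K : Finset V) : Set V) := by
        rw [Finset.coe_insert]
        exact hK.insert fun b hb _ => hcon b hb
      have := hmax (insert w K) (Finset.insert_subset hwC hKC) hclique
      rw [Finset.card_insert_of_notMem hwK] at this
      omega
    obtain ⟨ku, hkuK, hku⟩ := key u huC huK
    obtain ⟨kv, hkvK, hkv⟩ := key v hvC hvK
    have huku : u ≠ ku := fun h => huK (h ▸ hkuK)
    have hvkv : v ≠ kv := fun h => hvK (h ▸ hkvK)
    have hukv : u ≠ kv := fun h => huK (h ▸ hkvK)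
    have hvku : v ≠ ku := fun h => hvK (h ▸ hkuK)
    by_cases hadj : G.Adj u v
    · by_cases h1 : ∃ j ∈ K, ¬ G.Adj u j ∧ j ≠ kv
      · obtain ⟨j, hjK, hj, hjkv⟩ := h1
        exact Or.inl ⟨u, j, v, kv, huC, hKC hjK, hvC, hKC hkvK,
          fun h => huK (h ▸ hjK), hvkv, huv, hukv,
          fun h => hvK (h.symm ▸ hjK), hjkv, hj, hkv⟩
      · by_cases h2 : ∃ j ∈ K, ¬ G.Adj v j ∧ j ≠ ku
        · obtain ⟨j, hjK, hj, hjku⟩ := h2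
          exact Or.inl ⟨u, ku, v, j, huC, hKC hkuK, hvC, hKC hjK,
            huku, fun h => hvK (h ▸ hjK), huv, fun h => huK (h ▸ hjK),
            hvku.symm, Ne.symm hjku, hku, hj⟩
        · push_neg at h1 h2
          have hkukv : ku = kv := h1 ku hkuK hku
          -- build bigger clique
          exfalso
          set K' : Finset V := insert u (insert v (K.erase kv)) with hK'
          have hsub : K' ⊆ C := Finset.insert_subset huC
            (Finset.insert_subset hvC ((Finset.erase_subset _ _).trans hKC))
          have hcliq : G.IsClique (K' : Set V) := by
            rw [hK', Finset.coe_insert, Finset.coe_insert]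
            have hce : G.IsClique ((K.erase kv : Finset V) : Set V) :=
              hK.subset (Finset.coe_subset.mpr (Finset.erase_subset _ _))
            have hcv : G.IsClique (insert v ((K.erase kv : Finset V) : Set V)) := by
              refine hce.insert fun b hb hbv => ?_
              have hbK := Finset.mem_of_mem_erase (Finset.mem_coe.mp hb)
              have hbkv : b ≠ kv := Finset.ne_of_mem_erase (Finset.mem_coe.mp hb)
              by_contra hnadj
              exact hbkv ((h2 b hbK hnadj) ▸ hkukv)
            refine hcv.insert fun b hb hbu => ?_
            rcases Set.mem_insert_iff.mp hb with rfl | hb'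
            · exact hadj
            · have hbK := Finset.mem_of_mem_erase (Finset.mem_coe.mp hb')
              have hbkv : b ≠ kv := Finset.ne_of_mem_erase (Finset.mem_coe.mp hb')
              by_contra hnadj
              exact hbkv (h1 b hbK hnadj)
          have hle := hmax K' hsub hcliq
          have hvmem : v ∉ K.erase kv := fun h => hvK (Finset.mem_of_mem_erase h)
          have humem : u ∉ insert v (K.erase kv) := by
            simp only [Finset.mem_insert]
            rintro (rfl | h)
            · exact huv rfl
            · exact huK (Finset.mem_of_mem_erase h)
          have hkcard : 1 ≤ K.card := Finset.card_pos.mpr ⟨kv, hkvK⟩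
          rw [hK', Finset.card_insert_of_notMem humem,
            Finset.card_insert_of_notMem hvmem, Finset.card_erase_of_mem hkvK] at hle
          omega
    · by_cases hvk : G.Adj v ku
      · have hkukv : ku ≠ kv := fun h => hkv (h ▸ hvk)
        exact Or.inl ⟨u, ku, v, kv, huC, hKC hkuK, hvC, hKC hkvK,
          huku, hvkv, huv, hukv, hvku.symm, hkukv, hku, hkv⟩
      · exact Or.inr ⟨u, v, ku, huC, hvC, hKC hkuK, huv, huku, hvku, hadj, hku, hvk⟩
  · rintro (⟨a, b, c, d, haC, hbC, hcC, hdC, hab, hcd, hac, had, hbc, hbd, hnab, hncd⟩ |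
      ⟨x, y, z, hxC, hyC, hzC, hxy, hxz, hyz, hnxy, hnxz, hnyz⟩)
    · have h1 : a ∉ K ∨ b ∉ K := by
        by_contra h; push_neg at h
        exact hnab (hK (Finset.mem_coe.mpr h.1) (Finset.mem_coe.mpr h.2) hab)
      have h2 : c ∉ K ∨ d ∉ K := by
        by_contra h; push_neg at h
        exact hncd (hK (Finset.mem_coe.mpr h.1) (Finset.mem_coe.mpr h.2) hcd)
      rcases h1 with h1 | h1 <;> rcases h2 with h2 | h2
      · exact two_out a c haC hcC h1 h2 hac
      · exact two_out a d haC hdC h1 h2 had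
      · exact two_out b c hbC hcC h1 h2 hbc
      · exact two_out b d hbC hdC h1 h2 hbd
    · by_cases hxK : x ∈ K
      · have hyK : y ∉ K := fun h =>
          hnxy (hK (Finset.mem_coe.mpr hxK) (Finset.mem_coe.mpr h) hxy)
        have hzK : z ∉ K := fun h =>
          hnxz (hK (Finset.mem_coe.mpr hxK) (Finset.mem_coe.mpr h) hxz)
        exact two_out y z hyC hzC hyK hzK hyz
      · by_cases hyK : y ∈ K
        · have hzK : z ∉ K := fun h =>
            hnyz (hK (Finset.mem_coe.mpr hyK) (Finset.mem_coe.mpr h) hyz)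
          exact two_out x z hxC hzC hxK hzK hxz
        · exact two_out x y hxC hyC hxK hyK hxy
end

section
/- Let G be a finite simple graph with maximum degree Δ ≥ 2 that contains no clique on Δ vertices, and let C be a set of at least Δ + 1 vertices of G. Then every clique contained in C has at most |C| − 2 vertices, and consequently the induced subgraph G[C] contains a 2-anti-matching or a 3-independent set. -/
/-!
A clique inside `C` has fewer than `Δ ≤ |C| - 1` vertices, so `G[C]` has no clique on `|C| - 1`
vertices, and this alone forces the conclusion. Take an anti-edge `ab` in `C`. Either
`C \ {a, b}` contains a second anti-edge, or it is a clique on `|C| - 2` vertices that neither `a`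
nor `b` extends, so `a` and `b` have non-neighbours `c` and `d` in it: then `{a, b, c}` is
independent if `c = d`, and `ac, bd` is a 2-anti-matching otherwise.
-/

open Finset

namespace SimpleGraph

variable {V : Type*} (G : SimpleGraph V)

def HasTwoAntiMatching (C : Finset V) : Prop :=
  ∃ a b c d : V, a ∈ C ∧ b ∈ C ∧ c ∈ C ∧ d ∈ C ∧
    a ≠ b ∧ c ≠ d ∧ a ≠ c ∧ a ≠ d ∧ b ≠ c ∧ b ≠ d ∧
    ¬ G.Adj a b ∧ ¬ G.Adj c d

def HasThreeIndepSet (C : Finset V) : Prop :=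
  ∃ x y z : V, x ∈ C ∧ y ∈ C ∧ z ∈ C ∧ x ≠ y ∧ x ≠ z ∧ y ≠ z ∧
    ¬ G.Adj x y ∧ ¬ G.Adj x z ∧ ¬ G.Adj y z

variable {G}

theorem IsClique.card_lt_of_cliqueFree {n : ℕ} (hG : G.CliqueFree n) {K : Finset V}
    (hK : G.IsClique (K : Set V)) : K.card < n := by
  by_contra! hn
  obtain ⟨K', hK'K, hK'n⟩ := exists_subset_card_eq hn
  exact hG K' ⟨hK.subset (coe_subset.2 hK'K), hK'n⟩

theorem hasTwoAntiMatching_or_hasThreeIndepSet {C : Finset V}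
    (hC : ∀ K ⊆ C, G.IsClique (K : Set V) → K.card + 2 ≤ C.card) :
    G.HasTwoAntiMatching C ∨ G.HasThreeIndepSet C := by
  classical
  obtain ⟨a, ha, b, hb, hab, hnab⟩ : ∃ a ∈ C, ∃ b ∈ C, a ≠ b ∧ ¬ G.Adj a b := by
    by_contra! h
    have := hC C subset_rfl fun x hx y hy hxy => h x hx y hy hxy
    omega
  set C' := C \ {a, b}
  have hC'C : C' ⊆ C := sdiff_subset
  have hne : ∀ x ∈ C', a ≠ x ∧ b ≠ x := fun x hx => by
    simp only [C', mem_sdiff, mem_insert, mem_singleton] at hx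
    exact ⟨fun h => hx.2 (.inl h.symm), fun h => hx.2 (.inr h.symm)⟩
  by_cases hC' : G.IsClique (C' : Set V)
  · have hcard : C'.card + 2 = C.card := by
      rw [← card_pair hab,
        card_sdiff_add_card_eq_card (insert_subset ha (singleton_subset_iff.2 hb))]
    have hnbr : ∀ v ∈ C, v ∉ C' → ∃ c ∈ C', ¬ G.Adj v c := fun v hv hvC' => by
      by_contra! hadj
      have := hC _ (insert_subset hv hC'C)
        (by rw [coe_insert]; exact isClique_insert.2 ⟨hC', fun c hc _ => hadj c hc⟩)
      rw [card_insert_of_notMem hvC'] at this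
      omega
    obtain ⟨c, hc, hac⟩ := hnbr a ha fun h => (hne a h).1 rfl
    obtain ⟨d, hd, hbd⟩ := hnbr b hb fun h => (hne b h).2 rfl
    rcases eq_or_ne c d with rfl | hcd
    · exact .inr ⟨a, b, c, ha, hb, hC'C hc, hab, (hne c hc).1, (hne c hc).2, hnab, hac, hbd⟩
    · exact .inl ⟨a, c, b, d, ha, hC'C hc, hb, hC'C hd, (hne c hc).1, (hne d hd).2, hab,
        (hne d hd).1, (hne c hc).2.symm, hcd, hac, hbd⟩
  · obtain ⟨c, hc, d, hd, hcd, hncd⟩ : ∃ c ∈ C', ∃ d ∈ C', c ≠ d ∧ ¬ G.Adj c d := by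
      by_contra! h
      exact hC' fun x hx y hy hxy => h x hx y hy hxy
    exact .inl ⟨a, b, c, d, ha, hb, hC'C hc, hC'C hd, hab, hcd, (hne c hc).1, (hne d hd).1,
      (hne c hc).2, (hne d hd).2, hnab, hncd⟩

end SimpleGraph

theorem large_cliquefree_solitary_general
    {V : Type*} (G : SimpleGraph V)
    (Δ : ℕ) (hfree : G.CliqueFree Δ)
    (C : Finset V) (hC : Δ + 1 ≤ C.card) :
    (∀ K : Finset V, K ⊆ C → G.IsClique (K : Set V) → K.card + 2 ≤ C.card) ∧
      ((∃ a b c d : V, a ∈ C ∧ b ∈ C ∧ c ∈ C ∧ d ∈ C ∧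
          a ≠ b ∧ c ≠ d ∧ a ≠ c ∧ a ≠ d ∧ b ≠ c ∧ b ≠ d ∧
          ¬ G.Adj a b ∧ ¬ G.Adj c d) ∨
       (∃ x y z : V, x ∈ C ∧ y ∈ C ∧ z ∈ C ∧ x ≠ y ∧ x ≠ z ∧ y ≠ z ∧
          ¬ G.Adj x y ∧ ¬ G.Adj x z ∧ ¬ G.Adj y z)) := by
  have hclique : ∀ K ⊆ C, G.IsClique (K : Set V) → K.card + 2 ≤ C.card := fun K _ hK => by
    have := hK.card_lt_of_cliqueFree hfree
    omega
  exact ⟨hclique, G.hasTwoAntiMatching_or_hasThreeIndepSet hclique⟩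

/-- Let `G` be a finite simple graph with maximum degree `Δ ≥ 2` that contains
no clique on `Δ` vertices, and let `C` be a set of at least `Δ + 1` vertices of `G`.
Then every clique contained in `C` has at most `|C| − 2` vertices, and consequently the
induced subgraph `G[C]` contains a 2-anti-matching or a 3-independent set. -/
theorem large_cliquefree_solitary
    {V : Type*} [Fintype V] [DecidableEq V] (G : SimpleGraph V) [DecidableRel G.Adj]
    (Δ : ℕ) (hΔ2 : 2 ≤ Δ) (hΔ : G.maxDegree = Δ) (hfree : G.CliqueFree Δ)
    (C : Finset V) (hC : Δ + 1 ≤ C.card) :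
    (∀ K : Finset V, K ⊆ C → G.IsClique (K : Set V) → K.card + 2 ≤ C.card) ∧
      ((∃ a b c d : V, a ∈ C ∧ b ∈ C ∧ c ∈ C ∧ d ∈ C ∧
          a ≠ b ∧ c ≠ d ∧ a ≠ c ∧ a ≠ d ∧ b ≠ c ∧ b ≠ d ∧
          ¬ G.Adj a b ∧ ¬ G.Adj c d) ∨
       (∃ x y z : V, x ∈ C ∧ y ∈ C ∧ z ∈ C ∧ x ≠ y ∧ x ≠ z ∧ y ≠ z ∧
          ¬ G.Adj x y ∧ ¬ G.Adj x z ∧ ¬ G.Adj y z)) :=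
  large_cliquefree_solitary_general G Δ hfree C hC
end

section
/- Fix an integer d ≥ 6. Let Q be a finite simple graph whose vertex set is K ∪ {u₁, u₂, u₃}, where u₁, u₂, u₃ are three distinct vertices not in K, the induced subgraph Q[K] is a clique on d vertices, the set {u₁, u₂, u₃} is an independent set (pairwise non-adjacent), and each uᵢ is adjacent to every vertex of K. Then Q is (deg−1)-choosable. -/
/-!
Every vertex of `K` is adjacent to all other vertices, so it has a list of `d + 1` colours, while
each `uᵢ` has degree `d` and a list of `d - 1` colours. As the `uᵢ` are pairwise non-adjacent, it
suffices to pick `cᵢ ∈ L uᵢ` such that the lists `L w \ {c₁, c₂, c₃}`, `w ∈ K`, still satisfy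
Hall's condition, and only sets `T ⊆ K` of size `d - 1` or `d` can violate it.

Let `U` be the union of the lists on `K`. If `|U| = d + 1`, every list on `K` is `U`, and the `uᵢ`
whose lists lie in `U` can share one colour, because three `(d - 1)`-subsets of a `(d + 1)`-set
meet when `d ≥ 6`; the others get colours outside `U`. If `|U| ≥ d + 2`, it is enough that two
`cᵢ` coincide or that one lies outside `U`. Failing both, the lists of the `uᵢ` are disjoint
subsets of `U`, so `|U| ≥ 3(d - 1)`, and since `3(d - 1) > 2(d + 1)` one of their colours is
missing from the lists of two fixed vertices of `K`; every `T` of size `d - 1` contains one of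
these two vertices.
-/

open Finset

section Lists

variable {ι α : Type*}

theorem exists_forall_mem_and_eq {I : Finset ι} {L : ι → Finset α}
    (hI : ∀ v ∈ I, (L v).Nonempty) (J : Finset ι) {x : α} (hJ : ∀ v ∈ J, x ∈ L v) :
    ∃ g : ι → α, (∀ v ∈ I, g v ∈ L v) ∧ ∀ v ∈ J, g v = x := by
  classical
  have hc : ∀ v, ∃ c, v ∈ I → c ∈ L v := fun v ↦
    if hv : v ∈ I then (hI v hv).imp fun c hc _ ↦ hc else ⟨x, fun h ↦ absurd h hv⟩
  choose g₀ hg₀ using hc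
  refine ⟨fun v ↦ if v ∈ J then x else g₀ v, fun v hv ↦ ?_, fun v hv ↦ if_pos hv⟩
  beta_reduce
  split_ifs with h
  · exact hJ v h
  · exact hg₀ v hv

variable [DecidableEq α]

namespace Finset

theorem exists_injective_of_card_le_card_biUnion {K : Finset ι} {M : ι → Finset α}
    (h : ∀ T ⊆ K, #T ≤ #(T.biUnion M)) :
    ∃ f : K → α, Function.Injective f ∧ ∀ w : K, f w ∈ M w := by
  classical
  refine (all_card_le_biUnion_card_iff_exists_injective fun w : K ↦ M w).mp fun s ↦ ?_
  have hs := h (s.image Subtype.val) fun x hx ↦ by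
    obtain ⟨y, -, rfl⟩ := mem_image.mp hx
    exact y.2
  rwa [card_image_of_injective _ Subtype.val_injective, image_biUnion] at hs

theorem le_card_biUnion_sdiff {T : Finset ι} {L : ι → Finset α} {S A : Finset α} {n : ℕ}
    (hA : A ⊆ T.biUnion L) (h : n + #(S ∩ A) ≤ #A) :
    n ≤ #(T.biUnion fun w ↦ L w \ S) := by
  have hsub : A \ S ⊆ T.biUnion fun w ↦ L w \ S := by
    intro x hx
    obtain ⟨hxA, hxS⟩ := mem_sdiff.mp hx
    obtain ⟨w, hw, hxw⟩ := mem_biUnion.mp (hA hxA)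
    exact mem_biUnion.mpr ⟨w, hw, mem_sdiff.mpr ⟨hxw, hxS⟩⟩
  have hle := card_le_card hsub
  have := card_le_card (inter_subset_right : S ∩ A ⊆ A)
  rw [card_sdiff] at hle
  omega

end Finset

/-- When the lists on `K` have `#K + 1` colours and `#S ≤ 3`, this makes the lists `L w \ S`,
`w ∈ K`, satisfy Hall's condition: the first clause handles `T = K`, the second every `T` of size
`#K - 1`, and smaller `T` are automatic. -/
def Spares (K : Finset ι) (L : ι → Finset α) (S : Finset α) : Prop :=
  #K + #(S ∩ K.biUnion L) ≤ #(K.biUnion L) ∧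
    ∃ w₀ ∈ K, ∃ w₁ ∈ K, w₀ ≠ w₁ ∧ #(S ∩ L w₀) ≤ 2 ∧ #(S ∩ L w₁) ≤ 2

theorem card_le_card_biUnion_sdiff_of_spares {K : Finset ι} {L : ι → Finset α} {S : Finset α}
    (hL : ∀ w ∈ K, #(L w) = #K + 1) (hS : #S ≤ 3) (h : Spares K L S) :
    ∀ T ⊆ K, #T ≤ #(T.biUnion fun w ↦ L w \ S) := by
  classical
  obtain ⟨hU, w₀, hw₀, w₁, hw₁, hne, h₀, h₁⟩ := h
  intro T hT
  obtain rfl | ⟨w, hw⟩ := T.eq_empty_or_nonempty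
  · simp
  obtain rfl | hTK := eq_or_ne T K
  · exact le_card_biUnion_sdiff subset_rfl hU
  have hlt : #T < #K := card_lt_card (ssubset_of_subset_of_ne hT hTK)
  by_cases hsmall : #T + 2 ≤ #K
  · apply le_card_biUnion_sdiff (subset_biUnion_of_mem L hw)
    have := card_le_card (inter_subset_left : S ∩ L w ⊆ S)
    rw [hL w (hT hw)]
    omega
  obtain ⟨v, hvT, hv⟩ : ∃ v ∈ T, #(S ∩ L v) ≤ 2 := by
    by_contra! hcon
    have hsub : T ⊆ (K.erase w₀).erase w₁ := fun x hx ↦ by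
      have := hcon x hx
      refine mem_erase.mpr ⟨?_, mem_erase.mpr ⟨?_, hT hx⟩⟩ <;> rintro rfl <;> omega
    have hcard := card_le_card hsub
    rw [card_erase_of_mem (mem_erase.mpr ⟨hne.symm, hw₁⟩), card_erase_of_mem hw₀] at hcard
    have := one_lt_card.mpr ⟨w₀, hw₀, w₁, hw₁, hne⟩
    omega
  exact le_card_biUnion_sdiff (subset_biUnion_of_mem L hvT) (by rw [hL v (hT hvT)]; omega)

section Spares

variable {I K : Finset ι} {L : ι → Finset α}

theorem Spares.of_card_inter_le_two {S : Finset α} (hK : 1 < #K)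
    (h₂ : #(S ∩ K.biUnion L) ≤ 2) (hU : #K + #(S ∩ K.biUnion L) ≤ #(K.biUnion L)) :
    Spares K L S := by
  obtain ⟨w₀, hw₀, w₁, hw₁, hne⟩ := one_lt_card.mp hK
  have hle : ∀ w ∈ K, #(S ∩ L w) ≤ 2 := fun w hw ↦
    (card_le_card (inter_subset_inter_left (subset_biUnion_of_mem L hw))).trans h₂
  exact ⟨hU, w₀, hw₀, w₁, hw₁, hne, hle w₀ hw₀, hle w₁ hw₁⟩

theorem card_image_inter_le_card_sub_one [DecidableEq ι] {g : ι → α} {A : Finset α} {v : ι}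
    (hv : v ∈ I) (h : g v ∈ A → g v ∈ (I.erase v).image g) : #(I.image g ∩ A) ≤ #I - 1 := by
  have hsub : I.image g ∩ A ⊆ (I.erase v).image g := fun c hc ↦ by
    obtain ⟨hc, hcA⟩ := mem_inter.mp hc
    obtain ⟨u, hu, rfl⟩ := mem_image.mp hc
    by_cases huv : u = v
    · subst huv
      exact h hcA
    · exact mem_image_of_mem g (mem_erase.mpr ⟨huv, hu⟩)
  calc #(I.image g ∩ A) ≤ #((I.erase v).image g) := card_le_card hsub
    _ ≤ #(I.erase v) := card_image_le
    _ = #I - 1 := card_erase_of_mem hv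

theorem exists_spares_of_card_biUnion_le (hK : 6 ≤ #K) (hI : #I ≤ 3)
    (hLI : ∀ v ∈ I, #(L v) = #K - 1) (hLK : ∀ w ∈ K, #(L w) = #K + 1)
    (hU : #(K.biUnion L) ≤ #K + 1) :
    ∃ g : ι → α, (∀ v ∈ I, g v ∈ L v) ∧ Spares K L (I.image g) := by
  classical
  set U := K.biUnion L
  obtain ⟨w, hw⟩ : K.Nonempty := card_pos.mp (by omega)
  have hUK : #U = #K + 1 :=
    le_antisymm hU (hLK w hw ▸ card_le_card (subset_biUnion_of_mem L hw))
  -- Each list of `I` inside `U` misses only two colours of `U`, so at most six are missed in all.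
  set B := {v ∈ I | L v ⊆ U}.biUnion fun v ↦ U \ L v
  have hB : #B ≤ #I * 2 := by
    refine (card_biUnion_le_card_mul _ _ 2 fun v hv ↦ ?_).trans
      (Nat.mul_le_mul_right 2 (card_filter_le _ _))
    obtain ⟨hvI, hvU⟩ := mem_filter.mp hv
    rw [card_sdiff_of_subset hvU, hLI v hvI]
    omega
  obtain ⟨e, heU, heB⟩ := exists_mem_notMem_of_card_lt_card (s := B) (t := U) (by omega)
  have hc : ∀ v, ∃ c, (v ∈ I → c ∈ L v) ∧ (c ∈ U → c = e) := by
    intro v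
    by_cases hv : v ∈ I ∧ L v ⊆ U
    · refine ⟨e, fun _ ↦ by_contra fun he ↦ heB ?_, fun _ ↦ rfl⟩
      exact mem_biUnion.mpr ⟨v, mem_filter.mpr hv, mem_sdiff.mpr ⟨heU, he⟩⟩
    by_cases hvI : v ∈ I
    · obtain ⟨c, hcL, hcU⟩ := not_subset.mp fun h ↦ hv ⟨hvI, h⟩
      exact ⟨c, fun _ ↦ hcL, fun h ↦ absurd h hcU⟩
    · exact ⟨e, fun h ↦ absurd h hvI, fun _ ↦ rfl⟩
  choose g hgL hgU using hc
  have hS : #(I.image g ∩ U) ≤ 1 := by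
    refine card_le_one.mpr fun a ha b hb ↦ ?_
    obtain ⟨ha, haU⟩ := mem_inter.mp ha
    obtain ⟨hb, hbU⟩ := mem_inter.mp hb
    obtain ⟨u, -, rfl⟩ := mem_image.mp ha
    obtain ⟨u', -, rfl⟩ := mem_image.mp hb
    rw [hgU u haU, hgU u' hbU]
  exact ⟨g, hgL, Spares.of_card_inter_le_two (by omega) (by omega : #(I.image g ∩ U) ≤ 2)
    (by omega : #K + #(I.image g ∩ U) ≤ #U)⟩

theorem exists_spares_of_mem_inter (hI : #I ≤ 3) (hIne : ∀ v ∈ I, (L v).Nonempty)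
    (hK : 1 < #K) (hU : #K + 2 ≤ #(K.biUnion L)) {v₀ v₁ : ι} (hv₀ : v₀ ∈ I) (hv₁ : v₁ ∈ I)
    (hne : v₀ ≠ v₁) {x : α} (hx₀ : x ∈ L v₀) (hx₁ : x ∈ L v₁) :
    ∃ g : ι → α, (∀ v ∈ I, g v ∈ L v) ∧ Spares K L (I.image g) := by
  classical
  obtain ⟨g, hg, hgx⟩ := exists_forall_mem_and_eq hIne {v₀, v₁} (x := x) (by simp [hx₀, hx₁])
  have hS := card_image_inter_le_card_sub_one (g := g) (A := K.biUnion L) hv₀ fun _ ↦ by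
    rw [hgx v₀ (by simp), ← hgx v₁ (by simp)]
    exact mem_image_of_mem g (mem_erase.mpr ⟨hne.symm, hv₁⟩)
  exact ⟨g, hg, Spares.of_card_inter_le_two hK (by omega) (by omega)⟩

theorem exists_spares_of_notMem_biUnion (hI : #I ≤ 3) (hIne : ∀ v ∈ I, (L v).Nonempty)
    (hK : 1 < #K) (hU : #K + 2 ≤ #(K.biUnion L)) {v : ι} (hv : v ∈ I) {x : α} (hx : x ∈ L v)
    (hxU : x ∉ K.biUnion L) :
    ∃ g : ι → α, (∀ v ∈ I, g v ∈ L v) ∧ Spares K L (I.image g) := by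
  classical
  obtain ⟨g, hg, hgx⟩ := exists_forall_mem_and_eq hIne {v} (x := x) (by simp [hx])
  have hS := card_image_inter_le_card_sub_one (g := g) (A := K.biUnion L) hv fun h ↦
    absurd (hgx v (mem_singleton_self v) ▸ h) hxU
  exact ⟨g, hg, Spares.of_card_inter_le_two hK (by omega) (by omega)⟩

theorem exists_spares_of_pairwiseDisjoint (hK : 6 ≤ #K) (hI : #I = 3)
    (hLI : ∀ v ∈ I, #(L v) = #K - 1) (hLK : ∀ w ∈ K, #(L w) = #K + 1)
    (hIU : ∀ v ∈ I, L v ⊆ K.biUnion L) (hdisj : (I : Set ι).PairwiseDisjoint L) :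
    ∃ g : ι → α, (∀ v ∈ I, g v ∈ L v) ∧ Spares K L (I.image g) := by
  classical
  obtain ⟨w₀, hw₀, w₁, hw₁, hne⟩ := one_lt_card.mp (show 1 < #K by omega)
  have hIL : #(I.biUnion L) = 3 * (#K - 1) := by
    rw [card_biUnion hdisj, sum_congr rfl hLI, sum_const, hI, smul_eq_mul]
  -- `3 (#K - 1) > 2 (#K + 1)` exactly when `#K ≥ 6`
  have hW : #(L w₀ ∪ L w₁) ≤ 2 * (#K + 1) :=
    (card_union_le _ _).trans (by rw [hLK w₀ hw₀, hLK w₁ hw₁]; omega)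
  obtain ⟨x, hx, hxW⟩ :=
    exists_mem_notMem_of_card_lt_card (s := L w₀ ∪ L w₁) (t := I.biUnion L) (by omega)
  obtain ⟨v, hv, hxv⟩ := mem_biUnion.mp hx
  obtain ⟨g, hg, hgx⟩ := exists_forall_mem_and_eq (I := I)
    (fun u hu ↦ card_pos.mp (by rw [hLI u hu]; omega)) {v} (x := x) (by simp [hxv])
  have hgv : g v = x := hgx v (mem_singleton_self v)
  have hmiss : ∀ w, x ∉ L w → #(I.image g ∩ L w) ≤ 2 := fun w hxw ↦ by
    have := card_image_inter_le_card_sub_one (g := g) (A := L w) hv fun h ↦ absurd (hgv ▸ h) hxw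
    omega
  have hU : #(I.biUnion L) ≤ #(K.biUnion L) := card_le_card (biUnion_subset.mpr hIU)
  have hSU : #(I.image g ∩ K.biUnion L) ≤ 3 := (card_le_card inter_subset_left).trans
    (card_image_le.trans hI.le)
  exact ⟨g, hg, by omega, w₀, hw₀, w₁, hw₁, hne, hmiss w₀ fun h ↦ hxW (mem_union_left _ h),
    hmiss w₁ fun h ↦ hxW (mem_union_right _ h)⟩

theorem exists_spares (hK : 6 ≤ #K) (hI : #I = 3) (hLI : ∀ v ∈ I, #(L v) = #K - 1)
    (hLK : ∀ w ∈ K, #(L w) = #K + 1) :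
    ∃ g : ι → α, (∀ v ∈ I, g v ∈ L v) ∧ Spares K L (I.image g) := by
  have hIne : ∀ v ∈ I, (L v).Nonempty := fun v hv ↦ card_pos.mp (by rw [hLI v hv]; omega)
  obtain hU | hU := le_or_gt #(K.biUnion L) (#K + 1)
  · exact exists_spares_of_card_biUnion_le hK hI.le hLI hLK hU
  by_cases hout : ∃ v ∈ I, ∃ x ∈ L v, x ∉ K.biUnion L
  · obtain ⟨v, hv, x, hx, hxU⟩ := hout
    exact exists_spares_of_notMem_biUnion hI.le hIne (by omega) hU hv hx hxU
  push Not at hout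
  by_cases hdisj : (I : Set ι).PairwiseDisjoint L
  · exact exists_spares_of_pairwiseDisjoint hK hI hLI hLK hout hdisj
  obtain ⟨v₀, hv₀, v₁, hv₁, hne, hmeet⟩ :
      ∃ v₀ ∈ I, ∃ v₁ ∈ I, v₀ ≠ v₁ ∧ ¬Disjoint (L v₀) (L v₁) := by
    simpa [Set.PairwiseDisjoint, Set.Pairwise] using hdisj
  obtain ⟨x, hx₀, hx₁⟩ := not_disjoint_iff.mp hmeet
  exact exists_spares_of_mem_inter hI.le hIne (by omega) hU hv₀ hv₁ hne hx₀ hx₁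

end Spares

end Lists

namespace SimpleGraph

variable {V : Type*} {Q : SimpleGraph V} {I K : Finset V}

theorem degree_eq_card_of_mem_indep [Fintype V] [DecidableRel Q.Adj]
    (hcover : ∀ v, v ∈ I ∨ v ∈ K) (hI : Q.IsIndepSet I) (hIK : ∀ a ∈ I, ∀ w ∈ K, Q.Adj a w)
    {v : V} (hv : v ∈ I) : Q.degree v = #K := by
  rw [← card_neighborFinset_eq_degree]
  congr 1
  ext w
  rw [mem_neighborFinset]
  refine ⟨fun h ↦ (hcover w).resolve_left fun hw ↦ ?_, hIK v hv w⟩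
  exact hI hv hw (Q.ne_of_adj h) h

theorem isUniversal_of_mem_clique (hcover : ∀ v, v ∈ I ∨ v ∈ K) (hK : Q.IsClique K)
    (hIK : ∀ a ∈ I, ∀ w ∈ K, Q.Adj a w) {w : V} (hw : w ∈ K) : Q.IsUniversal w := by
  intro v hne
  rcases hcover v with hv | hv
  · exact (hIK v hv w hw).symm
  · exact hK hw hv hne

theorem card_eq_card_add_card [Fintype V] [DecidableEq V] (hcover : ∀ v, v ∈ I ∨ v ∈ K)
    (hIK : ∀ a ∈ I, ∀ w ∈ K, Q.Adj a w) : Fintype.card V = #I + #K := by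
  have hdisj : Disjoint I K :=
    Finset.disjoint_left.mpr fun {a} ha haK ↦ (hIK a ha a haK).ne rfl
  rw [← card_union_of_disjoint hdisj, ← card_univ]
  congr 1
  ext v
  simpa using hcover v

theorem exists_listColoring_of_hall {α : Type*} [DecidableEq α] {L : V → Finset α}
    (hcover : ∀ v, v ∈ I ∨ v ∈ K) (hI : Q.IsIndepSet I) (g : V → α) (hg : ∀ v ∈ I, g v ∈ L v)
    (hHall : ∀ T ⊆ K, #T ≤ #(T.biUnion fun w ↦ L w \ I.image g)) :
    ∃ φ : V → α, (∀ v, φ v ∈ L v) ∧ ∀ a b, Q.Adj a b → φ a ≠ φ b := by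
  classical
  obtain ⟨f, hf, hfL⟩ := exists_injective_of_card_le_card_biUnion hHall
  have hfS : ∀ w, f w ∉ I.image g := fun w ↦ (mem_sdiff.mp (hfL w)).2
  refine ⟨fun v ↦ if hv : v ∈ K then f ⟨v, hv⟩ else g v, fun v ↦ ?_, fun a b hab ↦ ?_⟩
  · beta_reduce
    split_ifs with hv
    · exact (mem_sdiff.mp (hfL _)).1
    · exact hg v ((hcover v).resolve_right hv)
  have hgI : ∀ v ∉ K, g v ∈ I.image g := fun v hv ↦
    mem_image_of_mem g ((hcover v).resolve_right hv)
  by_cases ha : a ∈ K <;> by_cases hb : b ∈ K <;>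
    simp only [ha, hb, dif_pos, dif_neg, not_false_iff]
  · exact fun h ↦ Q.ne_of_adj hab (congrArg Subtype.val (hf h))
  · exact fun h ↦ hfS _ (h ▸ hgI b hb)
  · exact fun h ↦ hfS _ (h ▸ hgI a ha)
  · exact fun _ ↦
      hI ((hcover a).resolve_right ha) ((hcover b).resolve_right hb) (Q.ne_of_adj hab) hab

end SimpleGraph

open SimpleGraph in
theorem solitary_deg_minus_one_choosable_general
    {V : Type*} [Fintype V] [DecidableEq V] (d : ℕ) (hd : 6 ≤ d)
    (Q : SimpleGraph V) [DecidableRel Q.Adj]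
    (K : Finset V) (u₁ u₂ u₃ : V)
    (h12 : u₁ ≠ u₂) (h13 : u₁ ≠ u₃) (h23 : u₂ ≠ u₃)
    (hV : insert u₁ (insert u₂ (insert u₃ K)) = (Finset.univ : Finset V))
    (hKcard : K.card = d) (hKclique : Q.IsClique (K : Set V))
    (hind : ¬ Q.Adj u₁ u₂ ∧ ¬ Q.Adj u₁ u₃ ∧ ¬ Q.Adj u₂ u₃)
    (hadj : ∀ w ∈ K, Q.Adj u₁ w ∧ Q.Adj u₂ w ∧ Q.Adj u₃ w) :
    ∀ L : V → Finset ℕ, (∀ v, (L v).card = Q.degree v - 1) →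
      ∃ φ : V → ℕ, (∀ v, φ v ∈ L v) ∧ ∀ a b, Q.Adj a b → φ a ≠ φ b := by
  intro L hL
  set I : Finset V := {u₁, u₂, u₃}
  have hI : #I = 3 := card_eq_three.mpr ⟨u₁, u₂, u₃, h12, h13, h23, rfl⟩
  have hcover : ∀ v, v ∈ I ∨ v ∈ K := fun v ↦ by
    have hv : v ∈ insert u₁ (insert u₂ (insert u₃ K)) := hV ▸ mem_univ v
    simpa [I, or_assoc] using hv
  have hIind : Q.IsIndepSet I := by
    simp [I, isIndepSet_iff, Set.pairwise_insert, hind, Q.adj_comm]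
  have hIK : ∀ a ∈ I, ∀ w ∈ K, Q.Adj a w := by
    simp only [I, mem_insert, mem_singleton]
    rintro a (rfl | rfl | rfl) w hw
    exacts [(hadj w hw).1, (hadj w hw).2.1, (hadj w hw).2.2]
  have hLI : ∀ v ∈ I, #(L v) = #K - 1 := fun v hv ↦ by
    rw [hL, degree_eq_card_of_mem_indep hcover hIind hIK hv]
  have hLK : ∀ w ∈ K, #(L w) = #K + 1 := fun w hw ↦ by
    rw [hL, (Q.degree_eq_card_sub_one w).mpr (isUniversal_of_mem_clique hcover hKclique hIK hw),
      card_eq_card_add_card hcover hIK, hI]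
    omega
  obtain ⟨g, hg, hS⟩ := exists_spares (hKcard ▸ hd) hI hLI hLK
  exact exists_listColoring_of_hall hcover hIind g hg
    (card_le_card_biUnion_sdiff_of_spares hLK (card_image_le.trans hI.le) hS)

/-- Fix `d ≥ 6`. Let `Q` be a finite simple graph whose vertex set is
`K ∪ {u₁, u₂, u₃}`, with `u₁, u₂, u₃` three distinct vertices not in `K`, such that `Q[K]`
is a clique on `d` vertices, `{u₁, u₂, u₃}` is an independent set, and each `uᵢ` is
adjacent to every vertex of `K`.  Then `Q` is `(deg − 1)`-choosable. -/
theorem solitary_deg_minus_one_choosable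
    {V : Type*} [Fintype V] [DecidableEq V] (d : ℕ) (hd : 6 ≤ d)
    (Q : SimpleGraph V) [DecidableRel Q.Adj]
    (K : Finset V) (u₁ u₂ u₃ : V)
    (h12 : u₁ ≠ u₂) (h13 : u₁ ≠ u₃) (h23 : u₂ ≠ u₃)
    (hu₁ : u₁ ∉ K) (hu₂ : u₂ ∉ K) (hu₃ : u₃ ∉ K)
    (hV : insert u₁ (insert u₂ (insert u₃ K)) = (Finset.univ : Finset V))
    (hKcard : K.card = d) (hKclique : Q.IsClique (K : Set V))
    (hind : ¬ Q.Adj u₁ u₂ ∧ ¬ Q.Adj u₁ u₃ ∧ ¬ Q.Adj u₂ u₃)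
    (hadj : ∀ w ∈ K, Q.Adj u₁ w ∧ Q.Adj u₂ w ∧ Q.Adj u₃ w) :
    ∀ L : V → Finset ℕ, (∀ v, (L v).card = Q.degree v - 1) →
      ∃ φ : V → ℕ, (∀ v, φ v ∈ L v) ∧ ∀ a b, Q.Adj a b → φ a ≠ φ b :=
  solitary_deg_minus_one_choosable_general d hd Q K u₁ u₂ u₃ h12 h13 h23 hV hKcard hKclique hind
    hadj
end

section
/- Let n, k ≥ 1 be integers and let p be a prime with p ≥ n. Let Φ be the (2k) × n matrix over the finite field F_p with entries Φ_{i,j} = j^{i−1} (computed in F_p) for i ∈ {1, …, 2k} and j ∈ {1, …, n}. If x and y are k-sparse vectors in F_p^n satisfying Φx = Φy, then x = y. In particular, every k-sparse vector x ∈ F_p^n is uniquely determined by the vector Φx ∈ F_p^{2k}. -/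
/-- Let `n, k ≥ 1` and `p` a prime with `p ≥ n`.  Let `Φ` be the `(2k) × n`
Vandermonde matrix over `F_p` with entries `Φ_{i,j} = j^{i−1}` for `i ∈ {1,…,2k}` and
`j ∈ {1,…,n}`.  If `x` and `y` are `k`-sparse vectors in `F_p^n` (at most `k` nonzero
coordinates) with `Φx = Φy`, then `x = y`; in particular every `k`-sparse vector is
uniquely determined by `Φx`. -/
theorem vandermonde_sparse_recovery
    (n k : ℕ) (hn : 1 ≤ n) (hk : 1 ≤ k) (p : ℕ) (hp : p.Prime) (hpn : n ≤ p)
    (Φ : Matrix (Fin (2 * k)) (Fin n) (ZMod p))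
    (hΦ : ∀ (i : Fin (2 * k)) (j : Fin n), Φ i j = (((j : ℕ) + 1 : ZMod p)) ^ (i : ℕ))
    (x y : Fin n → ZMod p)
    (hx : (Finset.univ.filter fun j => x j ≠ 0).card ≤ k)
    (hy : (Finset.univ.filter fun j => y j ≠ 0).card ≤ k)
    (h : Φ.mulVec x = Φ.mulVec y) :
    x = y := by
  haveI : Fact p.Prime := ⟨hp⟩
  set v : Fin n → ZMod p := fun j => ((j : ℕ) + 1 : ZMod p) with hv
  set z : Fin n → ZMod p := fun j => x j - y j with hz
  -- injectivity of v
  have hvinj : Set.InjOn v Set.univ := by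
    intro a _ b _ hab
    have hp0 : 0 < p := hp.pos
    have ha : ((a : ℕ) + 1 : ZMod p) = ((b : ℕ) + 1 : ZMod p) := hab
    have : ((a : ℕ) : ZMod p) = ((b : ℕ) : ZMod p) := by
      have := ha
      push_cast at this ⊢
      exact add_right_cancel this
    have hval : (a : ℕ) = (b : ℕ) := by
      have h1 : (((a : ℕ) : ZMod p)).val = (a : ℕ) := ZMod.val_cast_of_lt (lt_of_lt_of_le a.2 hpn)
      have h2 : (((b : ℕ) : ZMod p)).val = (b : ℕ) := ZMod.val_cast_of_lt (lt_of_lt_of_le b.2 hpn)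
      rw [← h1, ← h2, this]
    exact Fin.ext hval
  -- moment conditions
  have hmom : ∀ i : Fin (2 * k), ∑ j, z j * (v j) ^ (i : ℕ) = 0 := by
    intro i
    have := congrFun h i
    simp only [Matrix.mulVec, dotProduct] at this
    have : ∑ j, Φ i j * x j - ∑ j, Φ i j * y j = 0 := by rw [this, sub_self]
    rw [← Finset.sum_sub_distrib] at this
    calc ∑ j, z j * (v j) ^ (i : ℕ) = ∑ j, (Φ i j * x j - Φ i j * y j) := by
          refine Finset.sum_congr rfl fun j _ => ?_
          rw [hΦ i j, ← mul_sub]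
          ring
      _ = 0 := this
  -- polynomial condition
  have hpoly : ∀ q : Polynomial (ZMod p), q.natDegree < 2 * k →
      ∑ j, z j * q.eval (v j) = 0 := by
    intro q hq
    have heval : ∀ j, q.eval (v j) = ∑ i ∈ Finset.range (2 * k), q.coeff i * (v j) ^ i := by
      intro j
      exact Polynomial.eval_eq_sum_range' hq (v j)
    calc ∑ j, z j * q.eval (v j)
        = ∑ j, ∑ i ∈ Finset.range (2 * k), q.coeff i * (z j * (v j) ^ i) := by
          refine Finset.sum_congr rfl fun j _ => ?_
          rw [heval j, Finset.mul_sum]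
          exact Finset.sum_congr rfl fun i _ => by ring
      _ = ∑ i ∈ Finset.range (2 * k), q.coeff i * ∑ j, z j * (v j) ^ i := by
          rw [Finset.sum_comm]
          exact Finset.sum_congr rfl fun i _ => by rw [Finset.mul_sum]
      _ = 0 := by
          refine Finset.sum_eq_zero fun i hi => ?_
          rw [Finset.mem_range] at hi
          rw [hmom ⟨i, hi⟩, mul_zero]
  -- support
  set S : Finset (Fin n) := Finset.univ.filter fun j => z j ≠ 0 with hS
  have hScard : S.card ≤ 2 * k := by
    have hsub : S ⊆ (Finset.univ.filter fun j => x j ≠ 0) ∪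
        (Finset.univ.filter fun j => y j ≠ 0) := by
      intro j hj
      simp only [hS, Finset.mem_filter, Finset.mem_univ, true_and] at hj
      simp only [Finset.mem_union, Finset.mem_filter, Finset.mem_univ, true_and]
      by_contra hc
      push_neg at hc
      exact hj (by rw [hz]; simp [hc.1, hc.2])
    calc S.card ≤ _ := Finset.card_le_card hsub
      _ ≤ _ + _ := Finset.card_union_le _ _
      _ ≤ k + k := add_le_add hx hy
      _ = 2 * k := (two_mul k).symm
  -- z = 0
  have hz0 : ∀ j0, z j0 = 0 := by
    intro j0
    by_contra hj0
    have hj0S : j0 ∈ S := by simp [hS, hj0]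
    set q := Lagrange.basis S v j0 with hq
    have hvS : Set.InjOn v S := hvinj.mono (Set.subset_univ _)
    have hdeg : q.natDegree < 2 * k := by
      rw [hq, Lagrange.natDegree_basis hvS hj0S]
      have : 1 ≤ S.card := Finset.card_pos.mpr ⟨j0, hj0S⟩
      omega
    have := hpoly q hdeg
    have hsum : ∑ j, z j * q.eval (v j) = z j0 := by
      rw [Finset.sum_eq_single j0]
      · rw [hq, Lagrange.eval_basis_self hvS hj0S, mul_one]
      · intro b _ hb
        by_cases hbz : z b = 0
        · rw [hbz, zero_mul]
        · have hbS : b ∈ S := by simp [hS, hbz]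
          rw [hq, Lagrange.eval_basis_of_ne (Ne.symm hb) hbS, mul_zero]
      · intro hj; exact absurd (Finset.mem_univ j0) hj
    rw [hsum] at this
    exact hj0 this
  funext j
  have := hz0 j
  rw [hz] at this
  exact sub_eq_zero.mp this
end

section
/- Let G be a finite simple graph, let S and Y be two disjoint sets of vertices of G, and let r ≥ 1 be an integer. Suppose that every vertex of S has at least two neighbors in Y and that every vertex of Y has at most r neighbors in S. Then there exists a family of at least |S|/(2r) triples (v, u, w), where each triple consists of a vertex v ∈ S together with two distinct neighbors u, w ∈ Y of v, such that no vertex of G appears in more than one triple (all vertices occurring across all the triples are pairwise distinct). -/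
private lemma disjoint_triples_aux
    {V : Type*} [Fintype V] [DecidableEq V] (G : SimpleGraph V) [DecidableRel G.Adj]
    (r : ℕ) (hr : 1 ≤ r) :
    ∀ n (S Y : Finset V), S.card ≤ n → Disjoint S Y →
    (∀ v ∈ S, 2 ≤ (Y.filter fun u => G.Adj v u).card) →
    (∀ y ∈ Y, (S.filter fun v => G.Adj y v).card ≤ r) →
    ∃ T : Finset (V × V × V),
      (∀ t ∈ T, t.1 ∈ S ∧ t.2.1 ∈ Y ∧ t.2.2 ∈ Y ∧ t.2.1 ≠ t.2.2 ∧
        G.Adj t.1 t.2.1 ∧ G.Adj t.1 t.2.2) ∧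
      (∀ t ∈ T, ∀ t' ∈ T, t ≠ t' →
        ({t.1, t.2.1, t.2.2} : Finset V) ∩ ({t'.1, t'.2.1, t'.2.2} : Finset V) = ∅) ∧
      (S.card : ℝ) / (2 * (r : ℝ)) ≤ (T.card : ℝ) := by
  have hrpos : (0:ℝ) < 2 * (r:ℝ) := by
    have : (1:ℝ) ≤ (r:ℝ) := by exact_mod_cast hr
    linarith
  intro n
  induction n with
  | zero =>
    intro S Y hcard _ _ _
    refine ⟨∅, by simp, by simp, ?_⟩
    have : S.card = 0 := Nat.le_zero.mp hcard
    simp [this]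
  | succ n ih =>
    intro S Y hcard hdisj hS hY
    rcases S.eq_empty_or_nonempty with rfl | ⟨v, hv⟩
    · exact ⟨∅, by simp, by simp, by simp⟩
    · have hfil := hS v hv
      obtain ⟨u, hu, w, hw, huw⟩ := Finset.one_lt_card.mp (show 1 < (Y.filter fun u => G.Adj v u).card by omega)
      rw [Finset.mem_filter] at hu hw
      obtain ⟨huY, hvu⟩ := hu
      obtain ⟨hwY, hvw⟩ := hw
      set B : Finset V := (S.filter fun x => G.Adj u x) ∪ (S.filter fun x => G.Adj w x)
        with hB
      have hvB : v ∈ B := by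
        rw [hB, Finset.mem_union, Finset.mem_filter]
        exact Or.inl ⟨hv, hvu.symm⟩
      set S' : Finset V := S \ B with hS'
      set Y' : Finset V := Y \ {u, w} with hY'
      have hS'S : S' ⊆ S := Finset.sdiff_subset
      have hY'Y : Y' ⊆ Y := Finset.sdiff_subset
      have hvS' : v ∉ S' := by simp [hS', hvB]
      have hScard : S'.card ≤ n := by
        have hlt : S'.card < S.card :=
          Finset.card_lt_card (Finset.ssubset_iff_of_subset hS'S |>.mpr ⟨v, hv, hvS'⟩)
        omega
      have hS2 : ∀ x ∈ S', 2 ≤ (Y'.filter fun t => G.Adj x t).card := by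
        intro x hx
        have hxS : x ∈ S := hS'S hx
        have hxB : x ∉ B := (Finset.mem_sdiff.mp hx).2
        have hxu : ¬ G.Adj x u := fun h => hxB (by
          rw [hB]; simp only [Finset.mem_union, Finset.mem_filter]
          exact Or.inl ⟨hxS, h.symm⟩)
        have hxw : ¬ G.Adj x w := fun h => hxB (by
          rw [hB]; simp only [Finset.mem_union, Finset.mem_filter]
          exact Or.inr ⟨hxS, h.symm⟩)
        refine le_trans (hS x hxS) (Finset.card_le_card ?_)
        intro t ht
        rw [Finset.mem_filter] at ht
        rw [Finset.mem_filter, hY', Finset.mem_sdiff, Finset.mem_insert, Finset.mem_singleton]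
        refine ⟨⟨ht.1, ?_⟩, ht.2⟩
        rintro (rfl | rfl)
        · exact hxu ht.2
        · exact hxw ht.2
      have hY2 : ∀ y ∈ Y', (S'.filter fun x => G.Adj y x).card ≤ r := by
        intro y hy
        refine le_trans (Finset.card_le_card ?_) (hY y (hY'Y hy))
        exact Finset.filter_subset_filter _ hS'S
      obtain ⟨T', hT'1, hT'2, hT'3⟩ := ih S' Y' hScard
        (hdisj.mono hS'S hY'Y) hS2 hY2
      have hnotmem : (v, u, w) ∉ T' := fun h => hvS' (hT'1 _ h).1
      refine ⟨insert (v, u, w) T', ?_, ?_, ?_⟩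
      · intro t ht
        rcases Finset.mem_insert.mp ht with rfl | ht
        · exact ⟨hv, huY, hwY, huw, hvu, hvw⟩
        · obtain ⟨h1, h2, h3, h4, h5, h6⟩ := hT'1 t ht
          exact ⟨hS'S h1, hY'Y h2, hY'Y h3, h4, h5, h6⟩
      · -- disjointness
        have key : ∀ t ∈ T',
            ({v, u, w} : Finset V) ∩ ({t.1, t.2.1, t.2.2} : Finset V) = ∅ := by
          intro t ht
          obtain ⟨h1, h2, h3, _, _, _⟩ := hT'1 t ht
          have h2' := Finset.mem_sdiff.mp h2
          have h3' := Finset.mem_sdiff.mp h3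
          have h1S : t.1 ∈ S := hS'S h1
          rw [Finset.eq_empty_iff_forall_notMem]
          intro x hx
          rw [Finset.mem_inter, Finset.mem_insert, Finset.mem_insert,
            Finset.mem_insert, Finset.mem_insert, Finset.mem_singleton,
            Finset.mem_singleton] at hx
          obtain ⟨hl, hrr⟩ := hx
          rcases hl with rfl | rfl | rfl
          · rcases hrr with rfl | rfl | rfl
            · exact hvS' h1
            · exact Finset.disjoint_left.mp hdisj hv (hY'Y h2)
            · exact Finset.disjoint_left.mp hdisj hv (hY'Y h3)
          · rcases hrr with rfl | rfl | rfl
            · exact Finset.disjoint_left.mp hdisj h1S huY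
            · exact h2'.2 (by simp)
            · exact h3'.2 (by simp)
          · rcases hrr with rfl | rfl | rfl
            · exact Finset.disjoint_left.mp hdisj h1S hwY
            · exact h2'.2 (by simp)
            · exact h3'.2 (by simp)
        intro t ht t' ht' hne
        rcases Finset.mem_insert.mp ht with rfl | ht
        · rcases Finset.mem_insert.mp ht' with rfl | ht'
          · exact absurd rfl hne
          · exact key t' ht'
        · rcases Finset.mem_insert.mp ht' with rfl | ht'
          · rw [Finset.inter_comm]; exact key t ht
          · exact hT'2 t ht t' ht' hne
      · -- cardinality
        have hBcard : B.card ≤ 2 * r := by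
          have h1 := hY u huY
          have h2 := hY w hwY
          have := Finset.card_union_le (S.filter fun x => G.Adj u x)
            (S.filter fun x => G.Adj w x)
          rw [← hB] at this
          omega
        have hSle : S.card ≤ S'.card + 2 * r := by
          have h1 : S'.card + (S ∩ B).card = S.card := by
            rw [hS']; exact Finset.card_sdiff_add_card_inter S B
          have h2 : (S ∩ B).card ≤ B.card := Finset.card_le_card Finset.inter_subset_right
          omega
        rw [Finset.card_insert_of_notMem hnotmem]
        rw [div_le_iff₀ hrpos] at hT'3 ⊢
        have hc : (S.card : ℝ) ≤ (S'.card : ℝ) + 2 * r := by exact_mod_cast hSle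
        push_cast
        nlinarith [hT'3, hc]

/-- Let `G` be a finite simple graph, `S` and `Y` two disjoint sets of
vertices, and `r ≥ 1`.  If every vertex of `S` has at least two neighbors in `Y` and
every vertex of `Y` has at most `r` neighbors in `S`, then there is a family of at least
`|S|/(2r)` triples `(v, u, w)` with `v ∈ S` and `u ≠ w ∈ Y` two neighbors of `v`, such
that no vertex appears in more than one triple. -/
theorem disjoint_triples_lower_bound
    {V : Type*} [Fintype V] [DecidableEq V] (G : SimpleGraph V) [DecidableRel G.Adj]
    (S Y : Finset V) (hdisj : Disjoint S Y) (r : ℕ) (hr : 1 ≤ r)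
    (hS : ∀ v ∈ S, 2 ≤ (Y.filter fun u => G.Adj v u).card)
    (hY : ∀ y ∈ Y, (S.filter fun v => G.Adj y v).card ≤ r) :
    ∃ T : Finset (V × V × V),
      (∀ t ∈ T, t.1 ∈ S ∧ t.2.1 ∈ Y ∧ t.2.2 ∈ Y ∧ t.2.1 ≠ t.2.2 ∧
        G.Adj t.1 t.2.1 ∧ G.Adj t.1 t.2.2) ∧
      (∀ t ∈ T, ∀ t' ∈ T, t ≠ t' →
        ({t.1, t.2.1, t.2.2} : Finset V) ∩ ({t'.1, t'.2.1, t'.2.2} : Finset V) = ∅) ∧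
      (S.card : ℝ) / (2 * (r : ℝ)) ≤ (T.card : ℝ) := by
  exact disjoint_triples_aux G r hr S.card S Y le_rfl hdisj hS hY
end

section
/- Let G be a finite simple graph with maximum degree Δ, let ε, δ ∈ (0,1), and let C and C′ be two disjoint (ε, δ)-almost-cliques of G. Then every clique S of G that intersects both C and C′ satisfies |S| ≤ 2εΔ. In particular, if ε < 1/2 and Δ ≥ 1, no clique of G of size Δ intersects two disjoint (ε, δ)-almost-cliques. -/
/-- A set `C` of vertices is an `(ε, δ)`-almost-clique in a graph `G` of maximum degree
`Δ` if (1) `(1 − ε/2)Δ ≤ |C| ≤ (1 + ε/2)Δ`; (2) every `v ∈ C` has anti-degree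
`|C − N[v]| ≤ εΔ` and external degree `|N(v) − C| ≤ εΔ`; and (3) every vertex `v ∉ C`
satisfies `|C − N(v)| ≥ δΔ`. -/
def IsAlmostClique {V : Type*} [Fintype V] [DecidableEq V] (G : SimpleGraph V)
    [DecidableRel G.Adj] (Δ : ℕ) (ε δ : ℝ) (C : Finset V) : Prop :=
  ((1 - ε/2) * Δ ≤ (C.card : ℝ) ∧ (C.card : ℝ) ≤ (1 + ε/2) * Δ) ∧
  (∀ v ∈ C, ((C \ insert v (G.neighborFinset v)).card : ℝ) ≤ ε * Δ ∧
            ((G.neighborFinset v \ C).card : ℝ) ≤ ε * Δ) ∧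
  (∀ v : V, v ∉ C → δ * Δ ≤ ((C \ G.neighborFinset v).card : ℝ))

/-- Let `G` be a finite simple graph with maximum degree `Δ`, let
`ε, δ ∈ (0,1)`, and let `C` and `C'` be two disjoint `(ε, δ)`-almost-cliques of `G`.
Then every clique `S` of `G` intersecting both `C` and `C'` satisfies `|S| ≤ 2εΔ`.
In particular, if `ε < 1/2` and `Δ ≥ 1`, no clique of `G` of size `Δ` intersects two
disjoint `(ε, δ)`-almost-cliques. -/
theorem clique_meeting_two_almost_cliques_is_small
    {V : Type*} [Fintype V] [DecidableEq V] (G : SimpleGraph V) [DecidableRel G.Adj]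
    (Δ : ℕ) (hΔ : G.maxDegree = Δ)
    (ε δ : ℝ) (hε : ε ∈ Set.Ioo (0:ℝ) 1) (hδ : δ ∈ Set.Ioo (0:ℝ) 1)
    (C C' : Finset V) (hdisj : Disjoint C C')
    (hC : IsAlmostClique G Δ ε δ C) (hC' : IsAlmostClique G Δ ε δ C') :
    (∀ S : Finset V, G.IsClique (S : Set V) →
      (S ∩ C).Nonempty → (S ∩ C').Nonempty → (S.card : ℝ) ≤ 2 * ε * Δ) ∧
    (ε < 1/2 → 1 ≤ Δ → ∀ S : Finset V, G.IsClique (S : Set V) → S.card = Δ →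
      ¬ ((S ∩ C).Nonempty ∧ (S ∩ C').Nonempty)) := by
  have main : ∀ S : Finset V, G.IsClique (S : Set V) →
      (S ∩ C).Nonempty → (S ∩ C').Nonempty → (S.card : ℝ) ≤ 2 * ε * Δ := by
    intro S hS ⟨v, hv⟩ ⟨w, hw⟩
    rw [Finset.mem_inter] at hv hw
    have h1 : S \ C ⊆ G.neighborFinset v \ C := by
      intro u hu
      rw [Finset.mem_sdiff] at hu ⊢
      refine ⟨?_, hu.2⟩
      rw [SimpleGraph.mem_neighborFinset]
      exact (hS (Finset.mem_coe.mpr hu.1) (Finset.mem_coe.mpr hv.1)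
        (fun h => hu.2 (h ▸ hv.2))).symm
    have h2 : S ∩ C ⊆ G.neighborFinset w \ C' := by
      intro u hu
      rw [Finset.mem_inter] at hu
      rw [Finset.mem_sdiff]
      have huC' : u ∉ C' := fun h => (Finset.disjoint_left.mp hdisj hu.2) h
      refine ⟨?_, huC'⟩
      rw [SimpleGraph.mem_neighborFinset]
      exact (hS (Finset.mem_coe.mpr hu.1) (Finset.mem_coe.mpr hw.1)
        (fun h => huC' (h ▸ hw.2))).symm
    have c1 : ((S \ C).card : ℝ) ≤ ε * Δ :=
      le_trans (by exact_mod_cast Finset.card_le_card h1) (hC.2.1 v hv.2).2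
    have c2 : ((S ∩ C).card : ℝ) ≤ ε * Δ :=
      le_trans (by exact_mod_cast Finset.card_le_card h2) (hC'.2.1 w hw.2).2
    have hsum : (S ∩ C).card + (S \ C).card = S.card := Finset.card_inter_add_card_sdiff S C
    have : (S.card : ℝ) = ((S ∩ C).card : ℝ) + ((S \ C).card : ℝ) := by exact_mod_cast hsum.symm
    linarith
  refine ⟨main, ?_⟩
  intro hε2 hΔ1 S hS hcard ⟨h1, h2⟩
  have := main S hS h1 h2
  rw [hcard] at this
  have hΔR : (1:ℝ) ≤ (Δ:ℝ) := by exact_mod_cast hΔ1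
  nlinarith
end
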